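/- arXiv:2110.12036 — 4 statements merged into one kernel-verified Lean document; each statement's English description precedes it below -/
import Mathlib

section
/- In a maximal ancestral graph (MAG), if a vertex X is removable, then for every collider path (X, V₁, …, V_m, Y) and every vertex Z ∉ {X, Y, V₁, …, V_m} such that X and all V₁,…,V_m are parents of Z, the vertices Y and Z are adjacent. -/
/-- A mixed graph with directed (`dir x y` : x → y), bidirected and undirected edges. -/
structure MixedGraph (V : Type*) where
  dir : V → V → Prop
  bi : V → V → Prop
  und : V → V → Prop
  bi_symm : ∀ x y, bi x y → bi y x
  und_symm : ∀ x y, und x y → und y x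

namespace MixedGraph

variable {V : Type*}

def adj (G : MixedGraph V) (x y : V) : Prop :=
  G.dir x y ∨ G.dir y x ∨ G.bi x y ∨ G.und x y

/-- There is an arrowhead at `y` on the edge between `x` and `y`. -/
def head (G : MixedGraph V) (x y : V) : Prop := G.dir x y ∨ G.bi x y

def pa (G : MixedGraph V) (x : V) : Set V := {y | G.dir y x}
def child (G : MixedGraph V) (x : V) : Set V := {y | G.dir x y}
def nbr (G : MixedGraph V) (x : V) : Set V := {y | G.und x y}
def spouse (G : MixedGraph V) (x : V) : Set V := {y | G.bi x y}

/-- `x` is an ancestor of `y` (every vertex is an ancestor of itself). -/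
def anc (G : MixedGraph V) (x y : V) : Prop := Relation.ReflTransGen G.dir x y

def ancSet (G : MixedGraph V) (S : Set V) : Set V := {x | ∃ y ∈ S, G.anc x y}

/-- The set of descendants of `x` (including `x` itself). -/
def desc (G : MixedGraph V) (x : V) : Set V := {y | G.anc x y}

/-- A path, encoded as a duplicate-free list of at least two vertices with
consecutive vertices adjacent. -/
def IsPath (G : MixedGraph V) (p : List V) : Prop :=
  p.Chain' G.adj ∧ p.Nodup ∧ 2 ≤ p.length

def IsPathBetween (G : MixedGraph V) (p : List V) (x y : V) : Prop :=
  G.IsPath p ∧ p.head? = some x ∧ p.getLast? = some y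

/-- The vertex at (internal) position `i` of `p` is a collider: both incident
path edges have an arrowhead at it. -/
def ColliderAt (G : MixedGraph V) (p : List V) (i : ℕ) : Prop :=
  ∃ a v c, p[i-1]? = some a ∧ p[i]? = some v ∧ p[i+1]? = some c ∧
    G.head a v ∧ G.head c v

/-- A collider path: every non-endpoint vertex is a collider. -/
def IsColliderPath (G : MixedGraph V) (p : List V) : Prop :=
  G.IsPath p ∧ ∀ i, 1 ≤ i → i + 1 < p.length → G.ColliderAt p i

/-- `p` is an m-connecting path between `x` and `y` relative to `Z`. -/
def MConn (G : MixedGraph V) (p : List V) (x y : V) (Z : Set V) : Prop :=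
  G.IsPathBetween p x y ∧
  ∀ i v, 1 ≤ i → i + 1 < p.length → p[i]? = some v →
    (G.ColliderAt p i → v ∈ G.ancSet ({x, y} ∪ Z)) ∧
    (¬ G.ColliderAt p i → v ∉ Z)

/-- `Z` m-separates `x` and `y` in `G`. -/
def MSep (G : MixedGraph V) (x y : V) (Z : Set V) : Prop :=
  ∀ p, ¬ G.MConn p x y Z

/-- Induced subgraph over a set `S` of vertices. -/
def induce (G : MixedGraph V) (S : Set V) : MixedGraph V where
  dir x y := G.dir x y ∧ x ∈ S ∧ y ∈ S
  bi x y := G.bi x y ∧ x ∈ S ∧ y ∈ S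
  und x y := G.und x y ∧ x ∈ S ∧ y ∈ S
  bi_symm := fun x y h => ⟨G.bi_symm x y h.1, h.2.2, h.2.1⟩
  und_symm := fun x y h => ⟨G.und_symm x y h.1, h.2.2, h.2.1⟩

/-- `X` is removable in `G`: the induced subgraph on the remaining vertices
imposes exactly the same m-separation relations over them as `G`. -/
def Removable (G : MixedGraph V) (X : V) : Prop :=
  ∀ Y W : V, Y ≠ X → W ≠ X → Y ≠ W →
    ∀ Z : Set V, Z ⊆ {v | v ≠ X ∧ v ≠ Y ∧ v ≠ W} →
      (G.MSep Y W Z ↔ (G.induce {v | v ≠ X}).MSep Y W Z)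

/-- Ancestral: no directed cycles, no almost directed cycles, and endpoints of
undirected edges have no parents or spouses. -/
def Ancestral (G : MixedGraph V) : Prop :=
  (∀ x y, G.dir x y → ¬ G.anc y x) ∧
  (∀ x y, G.bi x y → ¬ G.anc y x) ∧
  (∀ x y, G.und x y → ∀ z, ¬ G.dir z x ∧ ¬ G.bi z x)

/-- A maximal ancestral graph: ancestral, and any two non-adjacent vertices are
m-separated by some set. -/
def IsMAG (G : MixedGraph V) : Prop :=
  G.Ancestral ∧
  ∀ x y, x ≠ y → ¬ G.adj x y →
    ∃ Z : Set V, Z ⊆ {v | v ≠ x ∧ v ≠ y} ∧ G.MSep x y Z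

/-- Markov boundary of `x`: the vertices with a collider path to `x`. -/
def Mb (G : MixedGraph V) (x : V) : Set V :=
  {y | ∃ p, G.IsColliderPath p ∧ p.head? = some y ∧ p.getLast? = some x}

/-- District of `x`: vertices joined to `x` by a path of bidirected edges. -/
def district (G : MixedGraph V) (x : V) : Set V :=
  {y | Relation.ReflTransGen G.bi x y}

/-- `Pa⁺(x) = Pa(x) ∪ Dis(x) ∪ Pa(Dis(x)) ∪ N(x)`. -/
def paPlus (G : MixedGraph V) (x : V) : Set V :=
  G.pa x ∪ G.district x ∪ (⋃ y ∈ G.district x, G.pa y) ∪ G.nbr x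

noncomputable def deltaPlus [Fintype V] (G : MixedGraph V) : ℕ :=
  Finset.univ.sup fun z : V => (G.paPlus z).ncard

/-- Condition 1 of the graphical characterization of removability. -/
def RemCond1 (G : MixedGraph V) (X : V) : Prop :=
  ∀ Y Z : V, G.adj X Y → Z ∈ G.child X ∪ G.nbr X → Z ≠ Y → G.adj Y Z

/-- Condition 2 of the graphical characterization of removability. -/
def RemCond2 (G : MixedGraph V) (X : V) : Prop :=
  ∀ (p : List V) (Y Z : V), G.IsColliderPath p → p.head? = some X →
    p.getLast? = some Y → Z ∉ p → (∀ v ∈ p.dropLast, G.dir v Z) → G.adj Y Z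

end MixedGraph

/-!
Suppose `Y` and `Z` are not adjacent. By maximality some `W` m-separates `Z` and `Y` in `G`, so
`W \ {X}` m-separates them in the graph with `X` deleted (an m-connecting path there is one in
`G`), hence, `X` being removable, also in `G`. But `Z, X, V₁, …, V_m, Y` is m-connecting given
`W \ {X}`: every `Vᵢ` is a collider and a parent of `Z`, and `X` is a non-collider outside the
set, because ancestrality forbids an arrowhead at `X` on the edge `X → Z`.
-/

theorem List.mem_dropLast_of_getElem? {α : Type*} {l : List α} {j : ℕ} {a : α}
    (hj : j + 1 < l.length) (ha : l[j]? = some a) : a ∈ l.dropLast :=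
  List.mem_of_getElem? (i := j) (by rwa [List.getElem?_dropLast, if_pos (by omega)])

namespace MixedGraph

variable {V : Type*} {G : MixedGraph V}

theorem adj_symm {x y : V} (h : G.adj x y) : G.adj y x := by
  rcases h with h | h | h | h
  · exact Or.inr (Or.inl h)
  · exact Or.inl h
  · exact Or.inr (Or.inr (Or.inl (G.bi_symm _ _ h)))
  · exact Or.inr (Or.inr (Or.inr (G.und_symm _ _ h)))

theorem IsPath.head_ne_getLast {p : List V} {x y : V} (hp : G.IsPath p)
    (hx : p.head? = some x) (hy : p.getLast? = some y) : x ≠ y := by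
  rintro rfl
  obtain ⟨t, rfl⟩ := List.head?_eq_some_iff.mp hx
  have ht : t ≠ [] := by rintro rfl; simpa using hp.2.2
  rw [List.getLast?_cons, List.getLast?_eq_getLast ht] at hy
  exact (List.nodup_cons.mp hp.2.1).1 (Option.some_inj.mp hy ▸ t.getLast_mem ht)

theorem ColliderAt.cons {p : List V} {z : V} {i : ℕ} (hi : 1 ≤ i) :
    G.ColliderAt (z :: p) (i + 1) ↔ G.ColliderAt p i := by
  obtain ⟨j, rfl⟩ := Nat.exists_eq_add_of_le' hi
  simp only [ColliderAt, Nat.add_sub_cancel, List.getElem?_cons_succ]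

section Induce

variable {S : Set V}

theorem induce_adj {x y : V} :
    (G.induce S).adj x y ↔ G.adj x y ∧ x ∈ S ∧ y ∈ S := by
  simp only [adj, induce]
  tauto

theorem induce_head {x y : V} :
    (G.induce S).head x y ↔ G.head x y ∧ x ∈ S ∧ y ∈ S := by
  simp only [head, induce]
  tauto

theorem anc_of_induce_anc {x y : V} (h : (G.induce S).anc x y) : G.anc x y :=
  Relation.ReflTransGen.mono (fun _ _ h => h.1) _ _ h

theorem IsPath.mem_of_induce : ∀ {p : List V}, (G.induce S).IsPath p → ∀ v ∈ p, v ∈ S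
  | a :: b :: t, ⟨hc, hn, _⟩, v, hv => by
    have hab := (induce_adj.mp (List.rel_of_isChain_cons_cons hc)).2
    rcases List.mem_cons.mp hv with rfl | hv
    · exact hab.1
    cases t with
    | nil => simp_all
    | cons c t =>
      exact IsPath.mem_of_induce ⟨hc.tail, (List.nodup_cons.mp hn).2, by simp⟩ v hv

theorem IsPath.of_induce {p : List V} (hp : (G.induce S).IsPath p) : G.IsPath p :=
  ⟨hp.1.imp fun _ _ h => (induce_adj.mp h).1, hp.2⟩

theorem induce_colliderAt {p : List V} {i : ℕ} (hp : ∀ v ∈ p, v ∈ S) :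
    (G.induce S).ColliderAt p i ↔ G.ColliderAt p i := by
  simp only [ColliderAt, induce_head]
  constructor
  · rintro ⟨a, v, c, ha, hv, hc, ⟨hav, -⟩, ⟨hcv, -⟩⟩
    exact ⟨a, v, c, ha, hv, hc, hav, hcv⟩
  · rintro ⟨a, v, c, ha, hv, hc, hav, hcv⟩
    have hS {u : V} {k : ℕ} (hu : p[k]? = some u) : u ∈ S := hp u (List.mem_of_getElem? hu)
    exact ⟨a, v, c, ha, hv, hc, ⟨hav, hS ha, hS hv⟩, ⟨hcv, hS hc, hS hv⟩⟩

theorem MConn.of_induce {p : List V} {x y : V} {W : Set V}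
    (h : (G.induce S).MConn p x y (W ∩ S)) : G.MConn p x y W := by
  obtain ⟨⟨hp, hx, hy⟩, hint⟩ := h
  have hpS := hp.mem_of_induce
  refine ⟨⟨hp.of_induce, hx, hy⟩, fun i v hi hin hv => ?_⟩
  obtain ⟨hcol, hncol⟩ := hint i v hi hin hv
  rw [induce_colliderAt hpS] at hcol hncol
  refine ⟨fun hc => ?_, fun hc hvW => hncol hc ⟨hvW, hpS v (List.mem_of_getElem? hv)⟩⟩
  obtain ⟨w, hw, hvw⟩ := hcol hc
  exact ⟨w, hw.imp_right fun h => h.1, anc_of_induce_anc hvw⟩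

theorem MSep.induce {x y : V} {W : Set V} (h : G.MSep x y W) :
    (G.induce S).MSep x y (W ∩ S) :=
  fun p hp => h p hp.of_induce

end Induce

theorem Ancestral.not_head_of_dir (hG : G.Ancestral) {x z : V} (h : G.dir x z) :
    ¬ G.head z x := by
  rintro (hzx | hzx)
  · exact hG.1 x z h (.single hzx)
  · exact hG.2.1 z x hzx (.single h)

theorem mConn_cons_of_isColliderPath (hG : G.Ancestral) {p : List V} {x y z : V} {W : Set V}
    (hp : G.IsColliderPath p) (hx : p.head? = some x) (hy : p.getLast? = some y)
    (hz : z ∉ p) (hpa : ∀ v ∈ p.dropLast, G.dir v z) (hxW : x ∉ W) :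
    G.MConn (z :: p) z y W := by
  obtain ⟨t, rfl⟩ := List.head?_eq_some_iff.mp hx
  have hxz : G.dir x z := hpa x (List.mem_dropLast_of_getElem? (j := 0) hp.1.2.2 rfl)
  refine ⟨⟨⟨?_, List.nodup_cons.mpr ⟨hz, hp.1.2.1⟩, by simp⟩, rfl, ?_⟩,
    fun i v hi hin hv => ?_⟩
  · exact List.IsChain.cons_cons (Or.inr (Or.inl hxz)) hp.1.1
  · simpa [List.getLast?_cons] using hy
  obtain ⟨j, rfl⟩ := Nat.exists_eq_add_of_le' hi
  rcases Nat.eq_zero_or_pos j with rfl | hj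
  · simp only [List.getElem?_cons_succ, List.getElem?_cons_zero, Option.some_inj] at hv
    subst hv
    refine ⟨fun hcol => ?_, fun _ => hxW⟩
    obtain ⟨_, _, _, ⟨⟩, ⟨⟩, -, hzx, -⟩ := hcol
    exact absurd hzx (hG.not_head_of_dir hxz)
  · have hcol := (ColliderAt.cons (z := z) hj).mpr (hp.2 j hj (by simpa using hin))
    refine ⟨fun _ => ⟨z, by simp, .single (hpa v ?_)⟩, fun h => absurd hcol h⟩
    exact List.mem_dropLast_of_getElem? (by simpa using hin) hv

end MixedGraph

open MixedGraph in
/-- In a MAG, if `X` is removable, then for every collider path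
`(X, V₁, …, V_m, Y)` and every `Z` not on the path with `X, V₁, …, V_m` all
parents of `Z`, the vertices `Y` and `Z` are adjacent. -/
theorem stmt1 {V : Type*} (G : MixedGraph V) (hG : G.IsMAG) (X : V)
    (hrem : G.Removable X) :
    ∀ (p : List V) (Y Z : V), G.IsColliderPath p → p.head? = some X →
      p.getLast? = some Y → Z ∉ p → (∀ v ∈ p.dropLast, G.dir v Z) →
      G.adj Y Z := by
  intro p Y Z hp hX hY hZp hpa
  by_contra hYZ
  have hZY : Z ≠ Y := fun h => hZp (h ▸ List.mem_of_mem_getLast? hY)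
  have hZX : Z ≠ X := fun h => hZp (h ▸ List.mem_of_mem_head? hX)
  have hYX : Y ≠ X := (hp.1.head_ne_getLast hX hY).symm
  obtain ⟨W, hWsub, hsep⟩ := hG.2 Z Y hZY (fun h => hYZ (adj_symm h))
  have hsepG : G.MSep Z Y (W ∩ {v | v ≠ X}) :=
    (hrem Z Y hZX hYX hZY _ fun v hv => ⟨hv.2, hWsub hv.1⟩).mpr hsep.induce
  exact hsepG _ (mConn_cons_of_isColliderPath hG.1 hp hX hY hZp hpa fun h => h.2 rfl)
end

section
/- Let X and Y be two non-adjacent vertices in a MAG M such that X is not an ancestor of Y. Define W = N(X) ∪ (Pa⁺(X) ∩ Anc({X,Y})), where Pa⁺(X) = Pa(X) ∪ Dis(X) ∪ Pa(Dis(X)) ∪ N(X). Then the set W \ {X,Y} m-separates X and Y in M. -/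
/-!
Let `p` be a path m-connecting `X` and `Y` given `Z = W \ {X, Y}`. Vertices of `N(X)` carry no
arrowheads in an ancestral graph, so every collider on `p` is an ancestor of `{X, Y}`. If every
inner vertex of `p` is a collider, `p` m-connects `X` and `Y` given any set, contradicting
maximality. Otherwise, the colliders preceding the first non-collider `v` lie in `Dis(X)`, and
the edge reaching `v` makes `v` a neighbour of `X`, a parent of `Dis(X)` or a member of `Dis(X)`;
in the last two cases `v` is also an ancestor of `{X, Y}` (a non-collider entered through an
arrowhead starts a directed path to a collider or to `Y`). So `v ∈ Z`, which blocks `p`.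
-/

namespace MixedGraph

variable {V : Type*} {G : MixedGraph V}

theorem mem_ancSet_of_anc {S : Set V} {a b : V} (hab : G.anc a b) (hb : b ∈ G.ancSet S) :
    a ∈ G.ancSet S :=
  let ⟨t, ht, hbt⟩ := hb
  ⟨t, ht, hab.trans hbt⟩

namespace Ancestral

theorem bi_of_head_of_head (hG : G.Ancestral) {a b : V} (hab : G.head a b)
    (hba : G.head b a) : G.bi a b := by
  rcases hab with hab | hab
  · rcases hba with hba | hba
    · exact absurd (.single hba) (hG.1 a b hab)
    · exact absurd (.single hab) (hG.2.1 b a hba)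
  · exact hab

theorem not_head_of_und (hG : G.Ancestral) {a b : V} (hab : G.und a b) (c : V) :
    ¬ G.head c a := by
  rintro (h | h)
  exacts [(hG.2.2 a b hab c).1 h, (hG.2.2 a b hab c).2 h]

theorem dir_of_head_of_not_head (hG : G.Ancestral) {a b c : V} (hab : G.head a b)
    (hbc : G.adj b c) (hcb : ¬ G.head c b) : G.dir b c := by
  rcases hbc with h | h | h | h
  · exact h
  · exact absurd (Or.inl h) hcb
  · exact absurd (Or.inr (G.bi_symm _ _ h)) hcb
  · exact absurd hab (hG.not_head_of_und h a)

theorem bi_of_head_of_mem_ancSet (hG : G.Ancestral) {x y v : V} (hxy : ¬ G.anc x y)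
    (hxv : G.head x v) (hv : v ∈ G.ancSet {x, y}) : G.bi x v := by
  rcases hxv with hxv | hxv
  · exfalso
    obtain ⟨t, rfl | rfl, hvt⟩ := hv
    exacts [hG.1 _ _ hxv hvt, hxy (.head hxv hvt)]
  · exact hxv

end Ancestral

section Path

variable {p : List V} {x y : V} {Z : Set V}

theorem colliderAt_iff {i : ℕ} (h1 : 1 ≤ i) (h2 : i + 1 < p.length) :
    G.ColliderAt p i ↔ G.head p[i - 1] p[i] ∧ G.head p[i + 1] p[i] := by
  simp [ColliderAt, List.getElem?_eq_getElem h2, List.getElem?_eq_getElem (by omega : i < p.length),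
    List.getElem?_eq_getElem (by omega : i - 1 < p.length)]

theorem IsPath.adj_getElem (hp : G.IsPath p) {i : ℕ} (h : i + 1 < p.length) :
    G.adj p[i] p[i + 1] :=
  List.isChain_iff_getElem.mp hp.1 i h

theorem IsPathBetween.getElem_zero (hp : G.IsPathBetween p x y) (h : 0 < p.length) :
    p[0] = x := by
  simpa [List.head?_eq_getElem?, List.getElem?_eq_getElem h] using hp.2.1

theorem IsPathBetween.getElem_length_sub_one (hp : G.IsPathBetween p x y)
    (h : 0 < p.length) : p[p.length - 1] = y := by
  simpa [List.getLast?_eq_getElem?, List.getElem?_eq_getElem (by omega : p.length - 1 < p.length)]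
    using hp.2.2

theorem IsPathBetween.getElem_ne_left (hp : G.IsPathBetween p x y) {i : ℕ} (h1 : 1 ≤ i)
    (h2 : i < p.length) : p[i] ≠ x := by
  rw [← hp.getElem_zero (by omega)]
  exact fun h => by have := (List.Nodup.getElem_inj_iff hp.1.2.1).mp h; omega

theorem IsPathBetween.getElem_ne_right (hp : G.IsPathBetween p x y) {i : ℕ}
    (h : i + 1 < p.length) : p[i] ≠ y := by
  rw [← hp.getElem_length_sub_one (by omega)]
  exact fun h' => by have := (List.Nodup.getElem_inj_iff hp.1.2.1).mp h'; omega

theorem mConn_of_forall_colliderAt (hp : G.IsPathBetween p x y)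
    (hcol : ∀ i, 1 ≤ i → ∀ h2 : i + 1 < p.length,
      G.ColliderAt p i ∧ p[i] ∈ G.ancSet {x, y}) :
    G.MConn p x y Z := by
  refine ⟨hp, fun i v h1 h2 hv => ⟨fun _ => ?_, fun hnc => absurd (hcol i h1 h2).1 hnc⟩⟩
  obtain ⟨t, ht, hvt⟩ := (hcol i h1 h2).2
  rw [List.getElem?_eq_getElem (by omega), Option.some_inj] at hv
  exact ⟨t, Or.inl ht, hv ▸ hvt⟩

namespace MConn

theorem getElem_mem_ancSet_union_of_colliderAt (hp : G.MConn p x y Z) {i : ℕ} (h1 : 1 ≤ i)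
    (h2 : i + 1 < p.length) (hc : G.ColliderAt p i) : p[i] ∈ G.ancSet ({x, y} ∪ Z) :=
  (hp.2 i _ h1 h2 (List.getElem?_eq_getElem _)).1 hc

theorem getElem_notMem_of_not_colliderAt (hp : G.MConn p x y Z) {i : ℕ} (h1 : 1 ≤ i)
    (h2 : i + 1 < p.length) (hc : ¬ G.ColliderAt p i) : p[i] ∉ Z :=
  (hp.2 i _ h1 h2 (List.getElem?_eq_getElem _)).2 hc

/-- A collider that is an ancestor of an arrowhead-free vertex of `Z` would have to be that
vertex. -/
theorem getElem_mem_ancSet_of_colliderAt (hp : G.MConn p x y Z)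
    (hZ : ∀ z ∈ Z, z ∈ G.ancSet {x, y} ∨ ∀ w, ¬ G.head w z) {i : ℕ} (h1 : 1 ≤ i)
    (h2 : i + 1 < p.length) (hc : G.ColliderAt p i) : p[i] ∈ G.ancSet {x, y} := by
  obtain ⟨t, ht | ht, hit⟩ := hp.getElem_mem_ancSet_union_of_colliderAt h1 h2 hc
  · exact ⟨t, ht, hit⟩
  rcases hZ t ht with ht | hfree
  · exact mem_ancSet_of_anc hit ht
  exfalso
  rcases hit.cases_tail with rfl | ⟨c, -, hct⟩
  · exact hfree _ ((colliderAt_iff h1 h2).mp hc).1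
  · exact hfree c (Or.inl hct)

/-- Leaving a vertex through an arrowhead, an m-connecting path can only continue as a directed
path until it reaches a collider or `y`, so the vertex is an ancestor of `{x, y}`. -/
theorem getElem_mem_ancSet_of_head (hG : G.Ancestral) (hp : G.MConn p x y Z)
    (hZ : ∀ z ∈ Z, z ∈ G.ancSet {x, y} ∨ ∀ w, ¬ G.head w z) {i : ℕ} (h1 : 1 ≤ i)
    (h2 : i < p.length) (hh : G.head p[i - 1] p[i]) : p[i] ∈ G.ancSet {x, y} := by
  obtain ⟨k, hk⟩ : ∃ k, i + k + 1 = p.length := ⟨p.length - i - 1, by omega⟩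
  induction k generalizing i with
  | zero =>
    have hy : p[i] = y := by
      simpa [show i = p.length - 1 by omega] using hp.1.getElem_length_sub_one (by omega)
    exact ⟨y, by simp, hy ▸ .refl⟩
  | succ k ih =>
    by_cases hc : G.ColliderAt p i
    · exact hp.getElem_mem_ancSet_of_colliderAt hZ h1 (by omega) hc
    have hdir : G.dir p[i] p[i + 1] := hG.dir_of_head_of_not_head hh
      (hp.1.1.adj_getElem (by omega)) fun h => hc ((colliderAt_iff h1 (by omega)).mpr ⟨hh, h⟩)
    have hh' : G.head p[i + 1 - 1] p[i + 1] := by simp only [Nat.add_sub_cancel]; exact Or.inl hdir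
    exact mem_ancSet_of_anc (.single hdir) (ih (by omega) (by omega) hh' (by omega))

/-- The first edge of the run cannot be `x → v`, since the collider `v` is an ancestor of
`{x, y}`; every later edge joins two colliders, so it is bidirected. -/
theorem getElem_mem_district (hG : G.Ancestral) (hp : G.MConn p x y Z)
    (hZ : ∀ z ∈ Z, z ∈ G.ancSet {x, y} ∨ ∀ w, ¬ G.head w z) (hxy : ¬ G.anc x y) {i : ℕ}
    (hcol : ∀ j, 1 ≤ j → j ≤ i → G.ColliderAt p j) (hi : i + 1 < p.length) :
    p[i] ∈ G.district x := by
  induction i with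
  | zero => exact hp.1.getElem_zero (by omega) ▸ .refl
  | succ i ih =>
    have hin : G.head p[i] p[i + 1] :=
      ((colliderAt_iff (by omega) hi).mp (hcol (i + 1) (by omega) le_rfl)).1
    refine (ih (fun j hj hji => hcol j hj (by omega)) (by omega)).tail ?_
    rcases Nat.eq_zero_or_pos i with rfl | hi0
    · have hx : p[0] = x := hp.1.getElem_zero (by omega)
      rw [hx] at hin ⊢
      exact hG.bi_of_head_of_mem_ancSet hxy hin
        (hp.getElem_mem_ancSet_of_colliderAt hZ le_rfl hi (hcol 1 le_rfl le_rfl))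
    · exact hG.bi_of_head_of_head hin
        ((colliderAt_iff hi0 (by omega)).mp (hcol i hi0 (Nat.le_succ i))).2

theorem getElem_mem_nbr_union_paPlus (hG : G.Ancestral) (hp : G.MConn p x y Z)
    (hZ : ∀ z ∈ Z, z ∈ G.ancSet {x, y} ∨ ∀ w, ¬ G.head w z) (hxy : ¬ G.anc x y) {s : ℕ}
    (h1 : 1 ≤ s) (h2 : s + 1 < p.length) (hcol : ∀ j, 1 ≤ j → j < s → G.ColliderAt p j) :
    p[s] ∈ G.nbr x ∪ (G.paPlus x ∩ G.ancSet {x, y}) := by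
  have hdis : p[s - 1] ∈ G.district x :=
    hp.getElem_mem_district hG hZ hxy (fun j hj hjs => hcol j hj (by omega)) (by omega)
  have hanc : p[s - 1] ∈ G.ancSet {x, y} := by
    rcases h1.eq_or_lt with rfl | hs
    · exact ⟨x, by simp, hp.1.getElem_zero (by omega) ▸ .refl⟩
    · exact hp.getElem_mem_ancSet_of_colliderAt hZ (by omega) (by omega)
        (hcol (s - 1) (by omega) (by omega))
  suffices G.head p[s] p[s - 1] ∨ G.und x p[s] by
    rcases this with (hd | hb) | hu
    · exact Or.inr ⟨Or.inl (Or.inr (Set.mem_biUnion hdis hd)),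
        mem_ancSet_of_anc (.single hd) hanc⟩
    · exact Or.inr ⟨Or.inl (Or.inl (Or.inr (hdis.tail (G.bi_symm _ _ hb)))),
        hp.getElem_mem_ancSet_of_head hG hZ h1 (by omega) (Or.inr (G.bi_symm _ _ hb))⟩
    · exact Or.inl hu
  rcases h1.eq_or_lt with rfl | hs
  · have hx : p[0] = x := hp.1.getElem_zero (by omega)
    have hadj := hp.1.1.adj_getElem (i := 0) (by omega)
    simp only [hx, Nat.sub_self, zero_add] at hadj ⊢
    rcases hadj with hd | hd | hb | hu
    · have hh : G.head p[1 - 1] p[1] := by simp only [Nat.sub_self, hx]; exact Or.inl hd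
      have hb := hG.bi_of_head_of_mem_ancSet hxy (Or.inl hd)
        (hp.getElem_mem_ancSet_of_head hG hZ le_rfl (by omega) hh)
      exact Or.inl (Or.inr (G.bi_symm _ _ hb))
    · exact Or.inl (Or.inl hd)
    · exact Or.inl (Or.inr (G.bi_symm _ _ hb))
    · exact Or.inr hu
  · have hc := (colliderAt_iff (by omega) (by omega)).mp (hcol (s - 1) (by omega) (by omega))
    simp only [Nat.sub_add_cancel h1] at hc
    exact Or.inl hc.2

end MConn

end Path

end MixedGraph

open MixedGraph in
/-- if `X` and `Y` are non-adjacent in a MAG and `X` is not an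
ancestor of `Y`, then `(N(X) ∪ (Pa⁺(X) ∩ Anc({X,Y}))) \ {X,Y}` m-separates
`X` and `Y`. -/
theorem stmt4 {V : Type*} (M : MixedGraph V) (hM : M.IsMAG) (X Y : V)
    (hne : X ≠ Y) (hnadj : ¬ M.adj X Y) (hnanc : ¬ M.anc X Y) :
    M.MSep X Y ((M.nbr X ∪ (M.paPlus X ∩ M.ancSet {X, Y})) \ {X, Y}) := by
  classical
  have hZ : ∀ z ∈ (M.nbr X ∪ (M.paPlus X ∩ M.ancSet {X, Y})) \ {X, Y},
      z ∈ M.ancSet {X, Y} ∨ ∀ w, ¬ M.head w z := by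
    rintro z ⟨hz | hz, -⟩
    exacts [Or.inr (hM.1.not_head_of_und (M.und_symm _ _ hz)), Or.inl hz.2]
  intro p hp
  by_cases hall : ∀ i, 1 ≤ i → i + 1 < p.length → M.ColliderAt p i
  · obtain ⟨Z, -, hsep⟩ := hM.2 X Y hne hnadj
    exact hsep p (mConn_of_forall_colliderAt hp.1 fun i h1 h2 =>
      ⟨hall i h1 h2, hp.getElem_mem_ancSet_of_colliderAt hZ h1 h2 (hall i h1 h2)⟩)
  push Not at hall
  obtain ⟨h1, h2, hnc⟩ := Nat.find_spec hall
  have hcol : ∀ j, 1 ≤ j → j < Nat.find hall → M.ColliderAt p j := fun j hj hjs => by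
    by_contra hc
    exact Nat.find_min hall hjs ⟨hj, by omega, hc⟩
  have hXY : p[Nat.find hall] ∉ ({X, Y} : Set V) := by
    rintro (h | h)
    exacts [hp.1.getElem_ne_left h1 (by omega) h, hp.1.getElem_ne_right h2 h]
  exact hp.getElem_notMem_of_not_colliderAt h1 h2 hnc
    ⟨hp.getElem_mem_nbr_union_paPlus hM.1 hZ hnanc h1 h2 hcol, hXY⟩
end

section
/- If X is a removable vertex in a MAG over vertices V, then for any two vertices Y, Z in the Markov boundary of X, each of Y and Z lies in the Markov boundary of the other; moreover, there exists a collider path between Y and Z passing only through vertices in Mb(X) ∪ {X}. -/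
/-!
Let `p : Y ⇝ X` and `q : Z ⇝ X` be collider paths. Gluing `p` to the reverse of `q` gives a walk
`Y ⇝ Z` on which every inner vertex except `X` is a collider. If `X` is a collider as well, this
is a collider walk. If the walk repeats a vertex, the repetition straddles `X` (both paths are
duplicate-free), and cutting out the loop leaves a collider walk. Cutting out loops turns a
collider walk into a collider path.

Otherwise `X` is a non-collider on a path. Take a window of this path around `X` whose inner
vertices other than `X` are ancestors of one of its two ends. It m-connects the ends given any set
avoiding `X`. Removability provides such a set for non-adjacent vertices: a separating set in `M`
also separates in `M \ X`, where `X` can be dropped from it, and the separation then lifts back to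
`M`. Hence the ends are adjacent. If the new edge carries the arrowheads the ends need as
colliders, splicing it in gives the collider walk. Otherwise, by ancestrality, it is directed out
of one end into the other. That end is then an ancestor, and the window grows past it.
-/

namespace List

variable {α : Type*} {A B l : List α} {i n : ℕ} {a : α}

theorem isChain_append_tail {R : α → α → Prop} (hA : A.IsChain R) (hB : B.IsChain R)
    (hAB : A.getLast? = B.head?) : (A ++ B.tail).IsChain R := by
  cases B with
  | nil => simpa using hA
  | cons b t =>
    refine hA.append hB.tail fun x hx y hy => ?_
    rw [hAB, head?_cons, Option.mem_some_iff] at hx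
    exact hx ▸ isChain_cons.1 hB |>.1 y hy

theorem getElem?_append_tail_of_le (hAB : A.getLast? = B.head?) (h : A.length ≤ i + 1) :
    (A ++ B.tail)[i]? = B[i + 1 - A.length]? := by
  rcases lt_or_ge i A.length with hi | hi
  · rw [getElem?_append_left hi, (by omega : i + 1 - A.length = 0), ← head?_eq_getElem?, ← hAB,
      getLast?_eq_getElem?, (by omega : A.length - 1 = i)]
  · rw [getElem?_append_right hi, getElem?_tail, (by omega : i - A.length + 1 = i + 1 - A.length)]

theorem getLast?_append_tail (hAB : A.getLast? = B.head?) :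
    (A ++ B.tail).getLast? = B.getLast? := by
  cases B with
  | nil => simpa using hAB
  | cons b t =>
    cases t with
    | nil => simpa using hAB
    | cons c t => simp only [tail_cons, getLast?_append_cons, getLast?_cons_cons]

theorem Nodup.lt_length_le_of_getElem?_append_tail_eq (hA : A.Nodup) (hB : B.Nodup)
    (hAB : A.getLast? = B.head?) {i i' : ℕ} (hii' : i < i') (hi' : i' < (A ++ B.tail).length)
    (heq : (A ++ B.tail)[i]? = (A ++ B.tail)[i']?) : i + 1 < A.length ∧ A.length ≤ i' := by
  rw [length_append, length_tail] at hi'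
  constructor
  · by_contra h
    rw [getElem?_append_tail_of_le (i := i) hAB (by omega),
      getElem?_append_tail_of_le (i := i') hAB (by omega)] at heq
    have := (getElem?_inj (by omega) hB).1 heq
    omega
  · by_contra h
    rw [getElem?_append_left (by omega), getElem?_append_left (by omega)] at heq
    have := (getElem?_inj (by omega) hA).1 heq
    omega

theorem mem_getLast?_dropLast_take (h : n + 1 < l.length)
    (ha : a ∈ (l.take (n + 1)).dropLast.getLast?) : 1 ≤ n ∧ l[n - 1]? = some a := by
  rw [dropLast_take h, getLast?_take] at ha
  split_ifs at ha with hn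
  · simp at ha
  · rw [getElem?_eq_getElem (by omega), Option.some_or] at ha
    exact ⟨by omega, by rw [getElem?_eq_getElem (by omega)]; exact ha⟩

end List

namespace MixedGraph

variable {V : Type*} {M : MixedGraph V}

open List

theorem adj_comm {x y : V} : M.adj x y ↔ M.adj y x := by
  have key : ∀ {x y : V}, M.adj x y → M.adj y x := by
    rintro x y (h | h | h | h)
    exacts [Or.inr (Or.inl h), Or.inl h, Or.inr (Or.inr (Or.inl (M.bi_symm _ _ h))),
      Or.inr (Or.inr (Or.inr (M.und_symm _ _ h)))]
  exact ⟨key, key⟩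

section ColliderAt

variable {l l' : List V} {i j n : ℕ}

theorem colliderAt_congr (hprev : l[i - 1]? = l'[j - 1]?) (hcur : l[i]? = l'[j]?)
    (hnext : l[i + 1]? = l'[j + 1]?) : M.ColliderAt l i ↔ M.ColliderAt l' j := by
  simp only [ColliderAt, hprev, hcur, hnext]

theorem ColliderAt.heads {a v c : V} (h : M.ColliderAt l i) (ha : l[i - 1]? = some a)
    (hv : l[i]? = some v) (hc : l[i + 1]? = some c) : M.head a v ∧ M.head c v := by
  obtain ⟨a', v', c', ha', hv', hc', h⟩ := h
  simp_all

theorem colliderAt_take (h : i + 1 < n) : M.ColliderAt (l.take n) i ↔ M.ColliderAt l i :=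
  colliderAt_congr (by rw [getElem?_take, if_pos (by omega)])
    (by rw [getElem?_take, if_pos (by omega)]) (by rw [getElem?_take, if_pos h])

theorem colliderAt_drop (h : 1 ≤ i) : M.ColliderAt (l.drop n) i ↔ M.ColliderAt l (n + i) :=
  colliderAt_congr (by rw [getElem?_drop, (by omega : n + (i - 1) = n + i - 1)]) getElem?_drop
    (by rw [getElem?_drop, Nat.add_assoc])

theorem colliderAt_reverse (h₁ : 1 ≤ i) (h₂ : i + 1 < l.length) :
    M.ColliderAt l.reverse i ↔ M.ColliderAt l (l.length - 1 - i) := by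
  have eprev : l.reverse[i - 1]? = l[l.length - 1 - i + 1]? := by
    rw [getElem?_reverse (by omega)]; congr 1; omega
  have ecur : l.reverse[i]? = l[l.length - 1 - i]? := getElem?_reverse (by omega)
  have enext : l.reverse[i + 1]? = l[l.length - 1 - i - 1]? := by
    rw [getElem?_reverse h₂, (by omega : l.length - 1 - (i + 1) = l.length - 1 - i - 1)]
  simp only [ColliderAt, eprev, ecur, enext]
  constructor <;> rintro ⟨a, v, c, ha, hv, hc, hav, hcv⟩ <;> exact ⟨c, v, a, hc, hv, ha, hcv, hav⟩

end ColliderAt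

def IsColliderWalk (M : MixedGraph V) (p : List V) : Prop :=
  p.IsChain M.adj ∧ ∀ i, 1 ≤ i → i + 1 < p.length → M.ColliderAt p i

section ColliderWalk

variable {l A B : List V} {n : ℕ} {u v w : V}

theorem isColliderPath_iff_isColliderWalk :
    M.IsColliderPath l ↔ M.IsColliderWalk l ∧ l.Nodup ∧ 2 ≤ l.length := by
  unfold IsColliderPath IsPath IsColliderWalk
  tauto

theorem IsColliderWalk.reverse (h : M.IsColliderWalk l) : M.IsColliderWalk l.reverse := by
  refine ⟨isChain_reverse.2 (h.1.imp fun _ _ => adj_comm.1), fun i h₁ h₂ => ?_⟩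
  rw [length_reverse] at h₂
  exact (colliderAt_reverse h₁ h₂).2 (h.2 _ (by omega) (by omega))

theorem IsColliderPath.reverse (h : M.IsColliderPath l) : M.IsColliderPath l.reverse := by
  obtain ⟨hw, hnd, hlen⟩ := isColliderPath_iff_isColliderWalk.1 h
  exact isColliderPath_iff_isColliderWalk.2 ⟨hw.reverse, nodup_reverse.2 hnd, by simpa using hlen⟩

theorem isColliderWalk_take (hl : l.IsChain M.adj)
    (h : ∀ i, 1 ≤ i → i + 1 < n → i + 1 < l.length → M.ColliderAt l i) :
    M.IsColliderWalk (l.take n) := by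
  refine ⟨hl.take n, fun i h₁ h₂ => ?_⟩
  rw [length_take] at h₂
  exact (colliderAt_take (by omega)).2 (h i h₁ (by omega) (by omega))

theorem isColliderWalk_drop (hl : l.IsChain M.adj)
    (h : ∀ i, n < i → i + 1 < l.length → M.ColliderAt l i) : M.IsColliderWalk (l.drop n) := by
  refine ⟨hl.drop n, fun i h₁ h₂ => ?_⟩
  rw [length_drop] at h₂
  exact (colliderAt_drop h₁).2 (h _ (by omega) (by omega))

theorem colliderAt_append_tail_of_lt {i : ℕ} (h : i + 1 < A.length) :
    M.ColliderAt (A ++ B.tail) i ↔ M.ColliderAt A i :=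
  colliderAt_congr (getElem?_append_left (by omega)) (getElem?_append_left (by omega))
    (getElem?_append_left h)

theorem colliderAt_append_tail_of_le {i : ℕ} (hAB : A.getLast? = B.head?) (h₁ : 1 ≤ i)
    (h : A.length ≤ i) :
    M.ColliderAt (A ++ B.tail) i ↔ M.ColliderAt B (i + 1 - A.length) := by
  refine colliderAt_congr ?_ (getElem?_append_tail_of_le (i := i) hAB (by omega))
    ((getElem?_append_tail_of_le (i := i + 1) hAB (by omega)).trans (by congr 1; omega))
  rw [getElem?_append_tail_of_le (i := i - 1) hAB (by omega)]
  congr 1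
  omega

theorem IsColliderWalk.append_tail (hA : M.IsColliderWalk A) (hB : M.IsColliderWalk B)
    (hAv : A.getLast? = some v) (hBv : B.head? = some v)
    (hv : ∀ a ∈ A.dropLast.getLast?, ∀ b ∈ B.tail.head?, M.head a v ∧ M.head b v) :
    M.IsColliderWalk (A ++ B.tail) := by
  have hAB : A.getLast? = B.head? := hAv.trans hBv.symm
  refine ⟨isChain_append_tail hA.1 hB.1 hAB, fun i h₁ h₂ => ?_⟩
  rcases lt_trichotomy (i + 1) A.length with hi | hi | hi
  · exact (colliderAt_append_tail_of_lt hi).2 (hA.2 i h₁ hi)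
  · have eprev : (A ++ B.tail)[i - 1]? = A.dropLast.getLast? := by
      rw [getElem?_append_left (by omega), getLast?_dropLast, if_neg (by omega)]
      congr 1
      omega
    have ecur : (A ++ B.tail)[i]? = some v := by
      rw [getElem?_append_left (by omega), ← hAv, getLast?_eq_getElem?]
      congr 1
      omega
    have enext : (A ++ B.tail)[i + 1]? = B.tail.head? := by
      rw [getElem?_append_tail_of_le hAB (by omega), head?_tail]
      congr 1
      omega
    have ha := getElem?_eq_getElem (l := A ++ B.tail) (i := i - 1) (by omega)
    have hb := getElem?_eq_getElem h₂
    rw [eprev] at ha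
    rw [enext] at hb
    exact ⟨_, v, _, eprev.trans ha, ecur, enext.trans hb, hv _ ha _ hb⟩
  · rw [colliderAt_append_tail_of_le hAB h₁ (by omega)]
    have hBlen : B.tail.length = B.length - 1 := length_tail
    rw [length_append] at h₂
    exact hB.2 _ (by omega) (by omega)

theorem IsColliderWalk.append (hA : M.IsColliderWalk A) (hB : M.IsColliderWalk B)
    (hAu : A.getLast? = some u) (hBw : B.head? = some w) (huw : M.adj u w)
    (hu : ∀ a ∈ A.dropLast.getLast?, M.head a u ∧ M.head w u)
    (hw : ∀ b ∈ B.tail.head?, M.head b w ∧ M.head u w) : M.IsColliderWalk (A ++ B) := by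
  have hedge : M.IsColliderWalk [u, w] :=
    ⟨by simpa using huw, fun i h₁ h₂ => by simp at h₂; omega⟩
  have hAw : M.IsColliderWalk (A ++ [w]) :=
    hA.append_tail hedge hAu rfl fun a ha b hb => by
      simp only [tail_cons, head?_cons, Option.mem_some_iff] at hb
      exact hb ▸ hu a ha
  have := hAw.append_tail hB (by simp) hBw fun a ha b hb => by
    rw [dropLast_concat, hAu, Option.mem_some_iff] at ha
    exact ha ▸ (hw b hb).symm
  rwa [append_assoc, singleton_append, cons_head?_tail hBw] at this

theorem exists_shorter_colliderWalk_of_getElem?_eq (hl : l.IsChain M.adj) {i i' : ℕ}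
    (hii' : i < i') (hi' : i' < l.length) (heq : l[i]? = l[i']?)
    (hcol : ∀ k, 1 ≤ k → k + 1 < l.length → (k ≤ i ∨ i' ≤ k) → M.ColliderAt l k) :
    ∃ c, M.IsColliderWalk c ∧ c.head? = l.head? ∧ c.getLast? = l.getLast? ∧ c ⊆ l ∧
      c.length < l.length := by
  obtain ⟨v, hv⟩ : ∃ v, l[i']? = some v := ⟨_, getElem?_eq_getElem hi'⟩
  have hvi : l[i]? = some v := heq.trans hv
  have hlast : (l.take (i + 1)).getLast? = some v := by
    rw [getLast?_take, if_neg (by omega), Nat.add_sub_cancel, hvi, Option.some_or]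
  have hhead : (l.drop i').head? = some v := by rw [head?_drop, hv]
  refine ⟨l.take (i + 1) ++ (l.drop i').tail, ?_, ?_, ?_, ?_, ?_⟩
  · refine (isColliderWalk_take hl fun k h₁ h₂ h₃ => hcol k h₁ h₃ (by omega)).append_tail
      (isColliderWalk_drop hl fun k h₁ h₂ => hcol k (by omega) h₂ (by omega)) hlast hhead ?_
    intro a ha b hb
    obtain ⟨h₁, ha⟩ := mem_getLast?_dropLast_take (by omega) ha
    rw [tail_drop, head?_drop] at hb
    have hb' : i' + 1 < l.length := (List.getElem?_eq_some_iff.1 hb).1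
    exact ⟨((hcol i h₁ (by omega) (.inl le_rfl)).heads ha hvi (getElem?_eq_getElem (by omega))).1,
      ((hcol i' (by omega) hb' (.inr le_rfl)).heads (getElem?_eq_getElem (by omega)) hv hb).2⟩
  · rw [head?_append_of_ne_nil _ (by rw [← length_pos_iff, length_take]; omega), head?_take,
      if_neg (by omega)]
  · rw [getLast?_append_tail (hlast.trans hhead.symm), getLast?_drop, if_neg (by omega)]
  · intro x hx
    rcases mem_append.1 hx with hx | hx
    exacts [mem_of_mem_take hx, mem_of_mem_drop (mem_of_mem_tail hx)]
  · simp only [length_append, length_take, length_tail, length_drop]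
    omega

theorem exists_colliderWalk_take_append_drop (hl : l.IsChain M.adj) {j m : ℕ} (hjm : j < m)
    (hu : l[j]? = some u) (hw : l[m]? = some w) (huw : M.adj u w)
    (hcol : ∀ k, 1 ≤ k → k + 1 < l.length → (k ≤ j ∨ m ≤ k) → M.ColliderAt l k)
    (hwu : 1 ≤ j → M.head w u) (huw' : m + 1 < l.length → M.head u w) :
    ∃ c, M.IsColliderWalk c ∧ c.head? = l.head? ∧ c.getLast? = l.getLast? ∧ c ⊆ l := by
  have hm : m < l.length := (List.getElem?_eq_some_iff.1 hw).1
  have hlast : (l.take (j + 1)).getLast? = some u := by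
    rw [getLast?_take, if_neg (by omega), Nat.add_sub_cancel, hu, Option.some_or]
  refine ⟨l.take (j + 1) ++ l.drop m, ?_, ?_, ?_, ?_⟩
  · refine (isColliderWalk_take hl fun k h₁ h₂ h₃ => hcol k h₁ h₃ (by omega)).append
      (isColliderWalk_drop hl fun k h₁ h₂ => hcol k (by omega) h₂ (by omega)) hlast
      (by rw [head?_drop, hw]) huw (fun a ha => ?_) (fun b hb => ?_)
    · obtain ⟨h₁, ha⟩ := mem_getLast?_dropLast_take (by omega) ha
      exact ⟨((hcol j h₁ (by omega) (.inl le_rfl)).heads ha hu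
        (getElem?_eq_getElem (by omega))).1, hwu h₁⟩
    · rw [tail_drop, head?_drop] at hb
      have hb' := (List.getElem?_eq_some_iff.1 hb).1
      exact ⟨((hcol m (by omega) hb' (.inr le_rfl)).heads (getElem?_eq_getElem (by omega)) hw
        hb).2, huw' hb'⟩
  · rw [head?_append_of_ne_nil _ (by rw [← length_pos_iff, length_take]; omega), head?_take,
      if_neg (by omega)]
  · rw [getLast?_append_of_ne_nil _ (by rw [← length_pos_iff, length_drop]; omega), getLast?_drop,
      if_neg (by omega)]
  · intro y hy
    rcases mem_append.1 hy with hy | hy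
    exacts [mem_of_mem_take hy, mem_of_mem_drop hy]

theorem IsColliderWalk.exists_isColliderPath (hl : M.IsColliderWalk l)
    (hne : l.head? ≠ l.getLast?) :
    ∃ c, M.IsColliderPath c ∧ c.head? = l.head? ∧ c.getLast? = l.getLast? ∧ c ⊆ l := by
  induction hn : l.length using Nat.strong_induction_on generalizing l with
  | _ n ih =>
  by_cases hnd : l.Nodup
  · have hlen : 2 ≤ l.length := by
      rcases l with _ | ⟨a, _ | ⟨b, t⟩⟩ <;> simp at hne ⊢
    exact ⟨l, isColliderPath_iff_isColliderWalk.2 ⟨hl, hnd, hlen⟩, rfl, rfl, Subset.refl _⟩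
  · obtain ⟨i, i', hii', hi', heq⟩ : ∃ i i', i < i' ∧ i' < l.length ∧ l[i]? = l[i']? := by
      simpa [nodup_iff_getElem?_ne_getElem?] using hnd
    obtain ⟨c, hc, hch, hcl, hcsub, hclen⟩ := exists_shorter_colliderWalk_of_getElem?_eq hl.1 hii'
      hi' heq fun k h₁ h₂ _ => hl.2 k h₁ h₂
    obtain ⟨d, hd, hdh, hdl, hdsub⟩ := ih _ (hn ▸ hclen) hc (hch ▸ hcl ▸ hne) rfl
    exact ⟨d, hd, hdh.trans hch, hdl.trans hcl, fun x hx => hcsub (hdsub hx)⟩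

theorem IsColliderPath.mem_insert_Mb {X v : V} (hl : M.IsColliderPath l)
    (hX : l.getLast? = some X) (hv : v ∈ l) : v ∈ insert X (M.Mb X) := by
  obtain ⟨i, hi⟩ := mem_iff_getElem?.1 hv
  have hil : i < l.length := (List.getElem?_eq_some_iff.1 hi).1
  obtain ⟨hw, hnd, -⟩ := isColliderPath_iff_isColliderWalk.1 hl
  by_cases hlast : i + 1 = l.length
  · rw [getLast?_eq_getElem?, ← hlast, Nat.add_sub_cancel, hi] at hX
    exact .inl (Option.some_inj.1 hX)
  · refine .inr ⟨l.drop i, isColliderPath_iff_isColliderWalk.2 ⟨?_, hnd.sublist (drop_sublist _ _),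
      by simp; omega⟩, by rw [head?_drop, hi], by rw [getLast?_drop, if_neg (by omega), hX]⟩
    exact isColliderWalk_drop hw.1 fun k _ hk => hw.2 k (by omega) hk

end ColliderWalk

section Induce

variable {T : Set V} {a b : V}

theorem adj_induce : (M.induce T).adj a b ↔ M.adj a b ∧ a ∈ T ∧ b ∈ T := by
  simp only [adj, induce]
  tauto

theorem head_induce : (M.induce T).head a b ↔ M.head a b ∧ a ∈ T ∧ b ∈ T := by
  simp only [head, induce]
  tauto

theorem anc_of_anc_induce (h : (M.induce T).anc a b) : M.anc a b :=
  Relation.ReflTransGen.mono (fun _ _ h => h.1) _ _ h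

theorem mem_of_isChain_induce {l : List V} (hl : l.IsChain (M.induce T).adj)
    (hlen : 2 ≤ l.length) (ha : a ∈ l) : a ∈ T := by
  obtain ⟨i, hi, rfl⟩ := mem_iff_getElem.1 ha
  rw [isChain_iff_getElem] at hl
  by_cases h : i + 1 < l.length
  · exact (adj_induce.1 (hl i h)).2.1
  · have := (adj_induce.1 (hl (i - 1) (by omega))).2.2
    simpa only [Nat.sub_add_cancel (by omega : 1 ≤ i)] using this

theorem colliderAt_induce {l : List V} {i : ℕ} (hl : ∀ v ∈ l, v ∈ T) :
    (M.induce T).ColliderAt l i ↔ M.ColliderAt l i := by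
  simp only [ColliderAt, head_induce]
  constructor
  · rintro ⟨a, v, c, ha, hv, hc, hav, hcv⟩
    exact ⟨a, v, c, ha, hv, hc, hav.1, hcv.1⟩
  · rintro ⟨a, v, c, ha, hv, hc, hav, hcv⟩
    have hvT := hl v (mem_of_getElem? hv)
    exact ⟨a, v, c, ha, hv, hc, ⟨hav, hl a (mem_of_getElem? ha), hvT⟩,
      ⟨hcv, hl c (mem_of_getElem? hc), hvT⟩⟩

/-- A path of the induced graph avoids `X`, so dropping `X` from the conditioning set changes
nothing there. -/
theorem MSep.induce_diff {X U W : V} {S : Set V} (h : M.MSep U W S) :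
    (M.induce {v | v ≠ X}).MSep U W (S \ {X}) := by
  rintro p ⟨⟨⟨hc, hnd, hlen⟩, hU, hW⟩, hp⟩
  have hT : ∀ v ∈ p, v ∈ {v | v ≠ X} := fun v hv => mem_of_isChain_induce hc hlen hv
  refine h p ⟨⟨⟨hc.imp fun _ _ h => (adj_induce.1 h).1, hnd, hlen⟩, hU, hW⟩,
    fun i v h₁ h₂ hv => ?_⟩
  obtain ⟨hcol, hncol⟩ := hp i v h₁ h₂ hv
  rw [colliderAt_induce hT] at hcol hncol
  refine ⟨fun hc => ?_, fun hnc hvS => hncol hnc ⟨hvS, hT v (mem_of_getElem? hv)⟩⟩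
  obtain ⟨y, hy, hvy⟩ := hcol hc
  exact ⟨y, Set.union_subset_union_right _ Set.sdiff_subset hy, anc_of_anc_induce hvy⟩

end Induce

section Removable

variable {X U W : V}

theorem Removable.exists_msep (hM : M.IsMAG) (hrem : M.Removable X) (hU : U ≠ X) (hW : W ≠ X)
    (hUW : U ≠ W) (hadj : ¬ M.adj U W) : ∃ S, X ∉ S ∧ M.MSep U W S := by
  obtain ⟨S, hS, hsep⟩ := hM.2 U W hUW hadj
  refine ⟨S \ {X}, fun h => h.2 rfl, (hrem U W hU hW hUW _ ?_).2 hsep.induce_diff⟩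
  rintro v ⟨hv, hvX⟩
  exact ⟨hvX, hS hv⟩

/-- The path `R` m-connects `U` and `W` given any set avoiding `X`. -/
theorem Removable.adj_of_isPathBetween (hM : M.IsMAG) (hrem : M.Removable X) (hU : U ≠ X)
    (hW : W ≠ X) (hUW : U ≠ W) {R : List V} (hR : M.IsPathBetween R U W)
    (hcol : ∀ i v, 1 ≤ i → i + 1 < R.length → R[i]? = some v → (M.ColliderAt R i ↔ v ≠ X))
    (hanc : ∀ v ∈ R, v ≠ X → v ∈ M.ancSet {U, W}) : M.adj U W := by
  by_contra hadj
  obtain ⟨S, hXS, hsep⟩ := hrem.exists_msep hM hU hW hUW hadj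
  refine hsep R ⟨hR, fun i v h₁ h₂ hv => ⟨fun hc => ?_, fun hnc => ?_⟩⟩
  · obtain ⟨y, hy, hvy⟩ := hanc v (mem_of_getElem? hv) ((hcol i v h₁ h₂ hv).1 hc)
    exact ⟨y, .inl hy, hvy⟩
  · rwa [not_not.1 (mt (hcol i v h₁ h₂ hv).2 hnc)]

end Removable

theorem Ancestral.dir_of_adj_of_not_head {a b c : V} (hM : M.Ancestral) (hab : M.adj a b)
    (hba : ¬ M.head b a) (hca : M.head c a) : M.dir a b := by
  rcases hab with h | h | h | h
  · exact h
  · exact absurd (.inl h) hba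
  · exact absurd (.inr (M.bi_symm _ _ h)) hba
  · obtain ⟨hdir, hbi⟩ := hM.2.2 a b h c
    exact (hca.elim hdir hbi).elim

theorem ancSet_pair_subset_of_anc {u u' w : V} (h : M.anc u w) :
    M.ancSet {u, w} ⊆ M.ancSet {u', w} := by
  rintro v ⟨y, rfl | rfl, hvy⟩
  exacts [⟨w, .inr rfl, hvy.trans h⟩, ⟨y, .inr rfl, hvy⟩]

section Window

variable {X : V} {l : List V} {x j m : ℕ} {u w : V}

theorem Removable.adj_of_window (hM : M.IsMAG) (hrem : M.Removable X) (hl : M.IsPath l)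
    (hcol : ∀ i v, 1 ≤ i → i + 1 < l.length → l[i]? = some v → (M.ColliderAt l i ↔ v ≠ X))
    (hjm : j < m) (hu : l[j]? = some u) (hw : l[m]? = some w) (huX : u ≠ X) (hwX : w ≠ X)
    (hanc : ∀ i v, j < i → i < m → l[i]? = some v → v ≠ X → v ∈ M.ancSet {u, w}) :
    M.adj u w := by
  obtain ⟨hchain, hnd, -⟩ := hl
  have hj : j < l.length := (List.getElem?_eq_some_iff.1 hu).1
  have hm : m < l.length := (List.getElem?_eq_some_iff.1 hw).1
  have hRget : ∀ i, i < m + 1 - j → ((l.drop j).take (m + 1 - j))[i]? = l[j + i]? :=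
    fun i hi => by rw [getElem?_take, if_pos hi, getElem?_drop]
  have hRlen : ((l.drop j).take (m + 1 - j)).length = m + 1 - j := by simp; omega
  have huw : u ≠ w := fun h => hjm.ne ((getElem?_inj hj hnd).1 (hu.trans (h ▸ hw.symm)))
  refine hrem.adj_of_isPathBetween hM huX hwX huw
    ⟨⟨(hchain.drop j).take (m + 1 - j), hnd.sublist ((take_sublist _ _).trans (drop_sublist _ _)),
      by omega⟩, ?_, ?_⟩ (fun i v h₁ h₂ hv => ?_) (fun v hv hvX => ?_)
  · rw [head?_eq_getElem?, hRget 0 (by omega), Nat.add_zero, hu]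
  · rw [getLast?_eq_getElem?, hRlen, hRget _ (by omega), (by omega : j + (m + 1 - j - 1) = m), hw]
  · rw [hRlen] at h₂
    rw [hRget i (by omega)] at hv
    rw [colliderAt_take (by omega), colliderAt_drop h₁]
    exact hcol _ v (by omega) (by omega) hv
  · obtain ⟨i, hi⟩ := mem_iff_getElem?.1 hv
    have hi' : i < m + 1 - j := hRlen ▸ (List.getElem?_eq_some_iff.1 hi).1
    rw [hRget i hi'] at hi
    rcases Nat.eq_zero_or_pos i with rfl | hi0
    · rw [Nat.add_zero, hu, Option.some_inj] at hi
      exact ⟨u, .inl rfl, hi ▸ .refl⟩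
    rcases eq_or_lt_of_le (by omega : j + i ≤ m) with him | him
    · rw [him, hw, Option.some_inj] at hi
      exact ⟨w, .inr rfl, hi ▸ .refl⟩
    · exact hanc _ v (by omega) him hi hvX

theorem Removable.exists_colliderWalk_of_window (hM : M.IsMAG) (hrem : M.Removable X)
    (hl : M.IsPath l) (hx : l[x]? = some X)
    (hcol : ∀ k, 1 ≤ k → k + 1 < l.length → k ≠ x → M.ColliderAt l k)
    (hnx : ¬ M.ColliderAt l x) (hjx : j < x) (hxm : x < m)
    (hu : l[j]? = some u) (hw : l[m]? = some w)
    (hanc : ∀ i v, j < i → i < m → l[i]? = some v → v ≠ X → v ∈ M.ancSet {u, w}) :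
    ∃ c, M.IsColliderWalk c ∧ c.head? = l.head? ∧ c.getLast? = l.getLast? ∧ c ⊆ l := by
  have hne : ∀ {k v}, l[k]? = some v → (v ≠ X ↔ k ≠ x) := fun hk => by
    rw [not_iff_not]
    constructor
    · rintro rfl
      exact (getElem?_inj (List.getElem?_eq_some_iff.1 hk).1 hl.2.1).1 (hk.trans hx.symm)
    · rintro rfl
      exact Option.some_inj.1 (hk.symm.trans hx)
  have hcol' : ∀ k v, 1 ≤ k → k + 1 < l.length → l[k]? = some v →
      (M.ColliderAt l k ↔ v ≠ X) := fun k v h₁ h₂ hk => by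
    rw [hne hk]
    exact ⟨fun h hkx => hnx (hkx ▸ h), hcol k h₁ h₂⟩
  induction hn : j + (l.length - m) using Nat.strong_induction_on generalizing j m u w with
  | _ n ih =>
  have hm : m < l.length := (List.getElem?_eq_some_iff.1 hw).1
  have huw : M.adj u w := hrem.adj_of_window hM hl hcol' (hjx.trans hxm) hu hw
    ((hne hu).2 hjx.ne) ((hne hw).2 hxm.ne') hanc
  by_cases hback : 1 ≤ j ∧ ¬ M.head w u
  · obtain ⟨a, ha⟩ : ∃ a, l[j - 1]? = some a := ⟨_, getElem?_eq_getElem (by omega)⟩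
    have hau := ((hcol j hback.1 (by omega) hjx.ne).heads ha hu (getElem?_eq_getElem (by omega))).1
    have hdir : M.anc u w := .single (hM.1.dir_of_adj_of_not_head huw hback.2 hau)
    refine ih _ (by omega) (by omega) hxm ha hw (fun i v h₁ h₂ hv hvX => ?_) rfl
    rcases eq_or_lt_of_le (by omega : j ≤ i) with rfl | hji
    · rw [hu, Option.some_inj] at hv
      exact ⟨w, .inr rfl, hv ▸ hdir⟩
    · exact ancSet_pair_subset_of_anc hdir (hanc i v hji h₂ hv hvX)
  by_cases hfwd : m + 1 < l.length ∧ ¬ M.head u w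
  · obtain ⟨b, hb⟩ : ∃ b, l[m + 1]? = some b := ⟨_, getElem?_eq_getElem hfwd.1⟩
    have hbw := ((hcol m (by omega) hfwd.1 hxm.ne').heads (getElem?_eq_getElem (by omega)) hw hb).2
    have hdir : M.anc w u := .single (hM.1.dir_of_adj_of_not_head (adj_comm.1 huw) hfwd.2 hbw)
    refine ih _ (by omega) hjx (by omega) hu hb (fun i v h₁ h₂ hv hvX => ?_) rfl
    rcases eq_or_lt_of_le (by omega : i ≤ m) with rfl | him
    · rw [hw, Option.some_inj] at hv
      exact ⟨u, .inl rfl, hv ▸ hdir⟩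
    · rw [Set.pair_comm] at hanc ⊢
      exact ancSet_pair_subset_of_anc hdir (hanc i v h₁ him hv hvX)
  simp only [not_and, not_not] at hback hfwd
  exact exists_colliderWalk_take_append_drop hl.1 (hjx.trans hxm) hu hw huw
    (fun k h₁ h₂ hk => hcol k h₁ h₂ (by omega)) hback hfwd

end Window

section Join

variable {X : V} {l p q : List V} {x : ℕ}

theorem Removable.exists_colliderWalk_of_chain (hM : M.IsMAG) (hrem : M.Removable X)
    (hl : l.IsChain M.adj) (hx : l[x]? = some X) (hx₁ : 1 ≤ x) (hx₂ : x + 1 < l.length)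
    (hcol : ∀ k, 1 ≤ k → k + 1 < l.length → k ≠ x → M.ColliderAt l k)
    (hrep : ∀ i i', i < i' → i' < l.length → l[i]? = l[i']? → i < x ∧ x < i') :
    ∃ c, M.IsColliderWalk c ∧ c.head? = l.head? ∧ c.getLast? = l.getLast? ∧ c ⊆ l := by
  by_cases hX : M.ColliderAt l x
  · refine ⟨l, ⟨hl, fun k h₁ h₂ => ?_⟩, rfl, rfl, Subset.refl _⟩
    by_cases hk : k = x
    exacts [hk ▸ hX, hcol k h₁ h₂ hk]
  by_cases hnd : l.Nodup
  · obtain ⟨u, hu⟩ : ∃ u, l[x - 1]? = some u := ⟨_, getElem?_eq_getElem (by omega)⟩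
    obtain ⟨w, hw⟩ : ∃ w, l[x + 1]? = some w := ⟨_, getElem?_eq_getElem hx₂⟩
    refine hrem.exists_colliderWalk_of_window hM ⟨hl, hnd, by omega⟩ hx hcol hX (by omega)
      (by omega) hu hw fun i v h₁ h₂ hv hvX => ?_
    rw [(by omega : i = x), hx, Option.some_inj] at hv
    exact absurd hv.symm hvX
  · obtain ⟨i, i', hii', hi', heq⟩ : ∃ i i', i < i' ∧ i' < l.length ∧ l[i]? = l[i']? := by
      simpa [nodup_iff_getElem?_ne_getElem?] using hnd
    obtain ⟨hix, hxi'⟩ := hrep i i' hii' hi' heq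
    obtain ⟨c, hc, hch, hcl, hcsub, -⟩ := exists_shorter_colliderWalk_of_getElem?_eq hl hii' hi'
      heq fun k h₁ h₂ hk => hcol k h₁ h₂ (by omega)
    exact ⟨c, hc, hch, hcl, hcsub⟩

theorem Removable.exists_colliderPath_of_colliderPaths (hM : M.IsMAG) (hrem : M.Removable X)
    (hp : M.IsColliderPath p) (hq : M.IsColliderPath q) (hpX : p.getLast? = some X)
    (hqX : q.getLast? = some X) (hpq : p.head? ≠ q.head?) :
    ∃ c, M.IsColliderPath c ∧ c.head? = p.head? ∧ c.getLast? = q.head? ∧ c ⊆ p ++ q := by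
  obtain ⟨hpw, hpnd, hp₂⟩ := isColliderPath_iff_isColliderWalk.1 hp
  obtain ⟨hqw, hqnd, hq₂⟩ := isColliderPath_iff_isColliderWalk.1 hq
  have hglue : p.getLast? = q.reverse.head? := by rw [head?_reverse, hpX, hqX]
  have hlen : (p ++ q.reverse.tail).length = p.length + q.length - 1 := by simp; omega
  have hhead : (p ++ q.reverse.tail).head? = p.head? :=
    head?_append_of_ne_nil _ (ne_nil_of_length_pos (by omega))
  have hlast : (p ++ q.reverse.tail).getLast? = q.head? := by
    rw [getLast?_append_tail hglue, getLast?_reverse]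
  have hcol : ∀ k, 1 ≤ k → k + 1 < (p ++ q.reverse.tail).length → k ≠ p.length - 1 →
      M.ColliderAt (p ++ q.reverse.tail) k := by
    intro k h₁ h₂ hk
    rcases lt_or_gt_of_ne hk with hk | hk
    · exact (colliderAt_append_tail_of_lt (by omega)).2 (hpw.2 k h₁ (by omega))
    · exact (colliderAt_append_tail_of_le hglue h₁ (by omega)).2
        (hqw.reverse.2 _ (by omega) (by simp; omega))
  have hrep : ∀ i i', i < i' → i' < (p ++ q.reverse.tail).length →
      (p ++ q.reverse.tail)[i]? = (p ++ q.reverse.tail)[i']? →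
      i < p.length - 1 ∧ p.length - 1 < i' := fun i i' hii' hi' heq => by
    have := hpnd.lt_length_le_of_getElem?_append_tail_eq (nodup_reverse.2 hqnd) hglue hii' hi' heq
    omega
  obtain ⟨c, hc, hch, hcl, hcsub⟩ := hrem.exists_colliderWalk_of_chain hM
    (isChain_append_tail hpw.1 hqw.reverse.1 hglue)
    (by rw [getElem?_append_left (by omega), ← getLast?_eq_getElem?, hpX]) (by omega) (by omega)
    hcol hrep
  obtain ⟨d, hd, hdh, hdl, hdsub⟩ := hc.exists_isColliderPath (by rwa [hch, hcl, hhead, hlast])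
  refine ⟨d, hd, hdh.trans (hch.trans hhead), hdl.trans (hcl.trans hlast), fun v hv => ?_⟩
  rcases mem_append.1 (hcsub (hdsub hv)) with h | h
  exacts [mem_append_left _ h, mem_append_right _ (mem_reverse.1 (mem_of_mem_tail h))]

end Join

end MixedGraph

open MixedGraph in
/-- if `X` is removable in a MAG, then any two members `Y, Z` of
the Markov boundary of `X` lie in each other's Markov boundary, and there is a
collider path between them passing only through vertices of `Mb(X) ∪ {X}`. -/
theorem stmt5 {V : Type*} (M : MixedGraph V) (hM : M.IsMAG) (X : V)
    (hrem : M.Removable X) (Y Z : V) (hY : Y ∈ M.Mb X) (hZ : Z ∈ M.Mb X)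
    (hYZ : Y ≠ Z) :
    Z ∈ M.Mb Y ∧ Y ∈ M.Mb Z ∧
      ∃ p : List V, M.IsColliderPath p ∧ p.head? = some Y ∧
        p.getLast? = some Z ∧ ∀ v ∈ p, v ∈ insert X (M.Mb X) := by
  obtain ⟨p, hp, hpY, hpX⟩ := hY
  obtain ⟨q, hq, hqZ, hqX⟩ := hZ
  obtain ⟨c, hc, hcY, hcZ, hcpq⟩ := hrem.exists_colliderPath_of_colliderPaths hM hp hq hpX hqX
    (by simpa [hpY, hqZ] using hYZ)
  rw [hpY] at hcY
  rw [hqZ] at hcZ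
  refine ⟨⟨c.reverse, hc.reverse, by rw [List.head?_reverse, hcZ],
    by rw [List.getLast?_reverse, hcY]⟩, ⟨c, hc, hcY, hcZ⟩, c, hc, hcY, hcZ, fun v hv => ?_⟩
  rcases List.mem_append.1 (hcpq hv) with h | h
  exacts [hp.mem_insert_Mb hpX h, hq.mem_insert_Mb hqX h]
end

section
/- Let G be a MAG and u = (Y, …, V₀, V₁, X, V₂, …, Z) a path in G on which X is a non-collider and V₁ is adjacent to V₂. Let ũ = (Y, …, V₁, V₂, …, Z) be the path obtained by shortcutting X. If V₁ is a collider on exactly one of u and ũ (and a non-collider on the other), then both X and V₁ are parents of V₂. -/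
/-!
If `V₁` were a collider on `ũ` but not on `u`, the edges `V₁ – X – V₂` would be forced to be
`V₁ → X → V₂` (an edge without arrowhead at an endpoint that already receives one is directed,
since undirected edges meet no arrowheads, and `X` is a non-collider), making `V₁` an ancestor
of `V₂` although `V₂ *→ V₁`: a directed or almost directed cycle. So `V₁` is a collider on `u`
only, which forces `V₁ → V₂`; then `X` is either an ancestor of `V₂` (if `X → V₁`) or a
non-collider receiving an arrowhead from `V₁` (if `X ↔ V₁`), and in both cases `X → V₂`.
-/

namespace MixedGraph

variable {V : Type*} {G : MixedGraph V} {x y z : V}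

theorem dir_of_adj_of_not_head (hxy : G.adj x y) (hyx : ¬ G.head y x) (hu : ¬ G.und x y) :
    G.dir x y := by
  rcases hxy with h | h | h | h
  · exact h
  · exact absurd (Or.inl h) hyx
  · exact absurd (Or.inr (G.bi_symm _ _ h)) hyx
  · exact absurd h hu

namespace Ancestral

theorem not_und_of_head_left (hG : G.Ancestral) (h : G.head z x) : ¬ G.und x y := fun hu =>
  have ⟨hdir, hbi⟩ := hG.2.2 x y hu z
  h.elim hdir hbi

theorem not_und_of_head_right (hG : G.Ancestral) (h : G.head z y) : ¬ G.und x y := fun hu =>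
  hG.not_und_of_head_left h (G.und_symm x y hu)

theorem not_head_of_anc (hG : G.Ancestral) (h : G.anc x y) : ¬ G.head y x
  | .inl hdir => hG.1 y x hdir h
  | .inr hbi => hG.2.1 y x hbi h

end Ancestral

end MixedGraph

open MixedGraph in
/-- on a path `u = (Y, …, V₀, V₁, X, V₂, …, Z)` in a MAG on which
`X` is a non-collider and `V₁` is adjacent to `V₂`, if `V₁` is a collider on
exactly one of `u` and the shortcut path `ũ = (Y, …, V₀, V₁, V₂, …, Z)`, then
both `X` and `V₁` are parents of `V₂`. -/
theorem stmt8 {V : Type*} (G : MixedGraph V) (hG : G.IsMAG)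
    (l₁ l₂ : List V) (Y V₀ V₁ X V₂ Z : V)
    (hu : G.IsPathBetween (l₁ ++ V₀ :: V₁ :: X :: V₂ :: l₂) Y Z)
    (hXnc : ¬ (G.head V₁ X ∧ G.head V₂ X))
    (hadj : G.adj V₁ V₂)
    (hxor : Xor' (G.head V₀ V₁ ∧ G.head X V₁) (G.head V₀ V₁ ∧ G.head V₂ V₁)) :
    G.dir X V₂ ∧ G.dir V₁ V₂ := by
  have hanc := hG.1
  have hchain := hu.1.1.suffix ⟨l₁, rfl⟩
  simp only [List.isChain_cons_cons] at hchain
  obtain ⟨-, hV₁X, hXV₂, -⟩ := hchain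
  rcases hxor with ⟨⟨h₀, hXV₁⟩, hnot⟩ | ⟨⟨h₀, hV₂V₁⟩, hnot⟩
  · have hV₁V₂ : G.dir V₁ V₂ := dir_of_adj_of_not_head hadj (fun h => hnot ⟨h₀, h⟩)
      (hanc.not_und_of_head_left hXV₁)
    have hV₂X : ¬ G.head V₂ X := by
      rcases hXV₁ with h | h
      · exact hanc.not_head_of_anc (.head h (.single hV₁V₂))
      · exact fun h' => hXnc ⟨.inr (G.bi_symm _ _ h), h'⟩
    exact ⟨dir_of_adj_of_not_head hXV₂ hV₂X (hanc.not_und_of_head_right (.inl hV₁V₂)), hV₁V₂⟩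
  · have hdV₁X : G.dir V₁ X := dir_of_adj_of_not_head hV₁X (fun h => hnot ⟨h₀, h⟩)
      (hanc.not_und_of_head_left hV₂V₁)
    have hdXV₂ : G.dir X V₂ := dir_of_adj_of_not_head hXV₂
      (fun h => hXnc ⟨.inl hdV₁X, h⟩) (hanc.not_und_of_head_left (.inl hdV₁X))
    exact absurd hV₂V₁ (hanc.not_head_of_anc (.head hdV₁X (.single hdXV₂)))
end
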